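/- Let E ⊆ E' be sets of finite perimeter in R^N with E' ∩ Ω = E ∩ Ω, let z ∈ ∂*E' ∩ ∂*Ω be a point of density 0 for E. Then ν_{E'}(z) = −ν_Ω(z). -/

import Mathlib

open MeasureTheory Metric Filter Set
open scoped ENNReal Topology NNReal

noncomputable section

/-- Euclidean space `ℝ^N`. -/
abbrev EucN (N : ℕ) := EuclideanSpace ℝ (Fin N)

variable {N : ℕ}

/-- The open upper half-ball `B⁺_{r,ν}(x)`. -/
def upperHalfBall (x ν : EucN N) (r : ℝ) : Set (EucN N) :=
  {z : EucN N | dist z x < r ∧ 0 < (inner ℝ (z - x) ν : ℝ)}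

/-- The open lower half-ball `B⁻_{r,ν}(x)`. -/
def lowerHalfBall (x ν : EucN N) (r : ℝ) : Set (EucN N) :=
  {z : EucN N | dist z x < r ∧ (inner ℝ (z - x) ν : ℝ) < 0}

/-- `ν` is the measure-theoretic outer unit normal of `E` at `x`. -/
def IsOuterNormal (E : Set (EucN N)) (x ν : EucN N) : Prop :=
  ‖ν‖ = 1 ∧
    Tendsto (fun r => volume (E ∩ upperHalfBall x ν r) / volume (upperHalfBall x ν r))
      (𝓝[>] (0:ℝ)) (𝓝 0) ∧
    Tendsto (fun r => volume (E ∩ lowerHalfBall x ν r) / volume (lowerHalfBall x ν r))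
      (𝓝[>] (0:ℝ)) (𝓝 1)

/-- The reduced boundary `∂*E`: points where an outer normal exists. -/
def redBoundary (E : Set (EucN N)) : Set (EucN N) := {x : EucN N | ∃ ν, IsOuterNormal E x ν}

/- The outer normal `ν_E(x)` (an arbitrary choice when it does not exist). -/
open Classical in
def outerNormal (E : Set (EucN N)) (x : EucN N) : EucN N :=
  if h : ∃ ν, IsOuterNormal E x ν then h.choose else 0

/-- The `(N-1)`-dimensional Hausdorff measure on `ℝ^N`. -/
def HN1 (N : ℕ) : Measure (EucN N) := μH[(N : ℝ) - 1]

/-- A set of finite perimeter: `H^{N-1}(∂*E) < ∞`. -/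
def HasFinPer (E : Set (EucN N)) : Prop :=
  MeasurableSet E ∧ HN1 N (redBoundary E) < ⊤

/-- A set of locally finite perimeter: its intersection with any ball has finite perimeter. -/
def HasLocFinPer (E : Set (EucN N)) : Prop :=
  MeasurableSet E ∧ ∀ (x : EucN N) (r : ℝ), HN1 N (redBoundary (E ∩ ball x r)) < ⊤

/-- The perimeter `P(E) = H^{N-1}(∂*E)`, as a real number. -/
def peri (E : Set (EucN N)) : ℝ := (HN1 N (redBoundary E)).toReal

open scoped Pointwise

/-! If `ν_{E'}(z) ≠ -ν_Ω(z)`, the lower half-balls of `E'` and `Ω` at `z` overlap in the section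
of an open cone, which fills a fixed positive fraction of `B_r(z)` at every scale `r`. Up to
`o(r^N)` the first half-ball lies in `E'` and the second in `Ω`, so up to `o(r^N)` the overlap lies
in `E' ∩ Ω = E ∩ Ω`, contradicting the density `0` of `E` at `z`. -/

section MeasureRatio

variable {α : Type*} [MeasurableSpace α] (μ : Measure α) {F L : Set α}

theorem measure_sdiff_div_le_one_sub (hF : MeasurableSet F) (hL : μ L ≠ ⊤) :
    μ (L \ F) / μ L ≤ 1 - μ (F ∩ L) / μ L := by
  rcases eq_or_ne (μ L) 0 with h0 | h0
  · simp [h0, measure_mono_null sdiff_subset h0]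
  · refine le_of_eq ?_
    rw [← ENNReal.div_self h0 hL, ← ENNReal.sub_div fun _ _ => h0, inter_comm,
      ← measure_inter_add_sdiff L hF,
      ENNReal.add_sub_cancel_left (measure_ne_top_of_subset inter_subset_left hL)]

theorem tendsto_measure_sdiff_div_of_tendsto_measure_inter_div {ι : Type*} {l : Filter ι}
    (hF : MeasurableSet F) {L B : ι → Set α} (hLB : ∀ i, L i ⊆ B i) (hB : ∀ i, μ (B i) ≠ ⊤)
    (h : Tendsto (fun i => μ (F ∩ L i) / μ (L i)) l (𝓝 1)) :
    Tendsto (fun i => μ (L i \ F) / μ (B i)) l (𝓝 0) := by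
  have h' : Tendsto (fun i => 1 - μ (F ∩ L i) / μ (L i)) l (𝓝 0) := by
    simpa using ENNReal.Tendsto.sub tendsto_const_nhds h (Or.inl ENNReal.one_ne_top)
  refine tendsto_of_tendsto_of_tendsto_of_le_of_le tendsto_const_nhds h' (fun _ => zero_le)
    fun i => ?_
  calc μ (L i \ F) / μ (B i) ≤ μ (L i \ F) / μ (L i) :=
        ENNReal.div_le_div le_rfl (measure_mono (hLB i))
    _ ≤ 1 - μ (F ∩ L i) / μ (L i) :=
        measure_sdiff_div_le_one_sub μ hF (measure_ne_top_of_subset (hLB i) (hB i))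

end MeasureRatio

theorem addHaar_vadd_smul_div_ball {E : Type*} [NormedAddCommGroup E] [NormedSpace ℝ E]
    [MeasurableSpace E] [BorelSpace E] [FiniteDimensional ℝ E] (μ : Measure E)
    [μ.IsAddHaarMeasure] (A : Set E) (x : E) {r : ℝ} (hr : 0 < r) :
    μ (x +ᵥ r • A) / μ (ball x r) = μ A / μ (ball 0 1) := by
  rw [measure_vadd, μ.addHaar_smul_of_nonneg hr.le, μ.addHaar_ball_of_pos x hr,
    ENNReal.mul_div_mul_left _ _ (ENNReal.ofReal_pos.2 (pow_pos hr _)).ne' ENNReal.ofReal_ne_top]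

theorem lowerHalfBall_subset_ball (x ν : EucN N) (r : ℝ) : lowerHalfBall x ν r ⊆ ball x r :=
  fun _ hw => mem_ball.2 hw.1

theorem isOpen_lowerHalfBall (x ν : EucN N) (r : ℝ) : IsOpen (lowerHalfBall x ν r) :=
  (isOpen_lt (continuous_id.dist continuous_const) continuous_const).inter
    (isOpen_lt (((continuous_id.sub continuous_const).inner continuous_const :
      Continuous fun z : EucN N => inner ℝ (z - x) ν)) continuous_const)

theorem lowerHalfBall_eq_vadd_smul (x ν : EucN N) {r : ℝ} (hr : 0 < r) :
    lowerHalfBall x ν r = x +ᵥ r • lowerHalfBall 0 ν 1 := by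
  ext w
  rw [mem_vadd_set_iff_neg_vadd_mem, mem_smul_set_iff_inv_smul_mem₀ hr.ne']
  simp only [lowerHalfBall, mem_ofPred_eq, sub_zero, vadd_eq_add, norm_smul,
    real_inner_smul_left, Real.norm_eq_abs, abs_inv, abs_of_pos hr, neg_add_eq_sub,
    dist_eq_norm, inv_mul_lt_iff₀ hr, mul_one, mul_zero]

theorem nonempty_lowerHalfBall_inter {ν μ : EucN N} (hν : ‖ν‖ = 1) (hμ : ‖μ‖ = 1)
    (hne : ν ≠ -μ) (x : EucN N) {r : ℝ} (hr : 0 < r) :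
    (lowerHalfBall x ν r ∩ lowerHalfBall x μ r).Nonempty := by
  have hs : 0 < ‖ν + μ‖ := norm_pos_iff.2 fun h => hne (eq_neg_of_add_eq_zero_left h)
  have hsq : ‖ν + μ‖ ^ 2 = 2 + 2 * inner ℝ ν μ := by
    rw [norm_add_sq_real, hν, hμ]; ring
  set t := r / (2 * ‖ν + μ‖)
  have ht : 0 < t := by positivity
  have htr : t * ‖ν + μ‖ = r / 2 := by simp only [t]; field_simp
  have hmem : ∀ η, 0 < inner ℝ (ν + μ) η → x - t • (ν + μ) ∈ lowerHalfBall x η r := by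
    intro η hη
    refine ⟨?_, ?_⟩
    · rw [dist_eq_norm, sub_sub_cancel_left, norm_neg, norm_smul, Real.norm_of_nonneg ht.le, htr]
      linarith
    · rw [sub_sub_cancel_left, inner_neg_left, real_inner_smul_left, neg_lt_zero]
      positivity
  refine ⟨_, hmem ν ?_, hmem μ ?_⟩
  · rw [inner_add_left, real_inner_self_eq_norm_sq, hν, real_inner_comm]
    nlinarith
  · rw [inner_add_left, real_inner_self_eq_norm_sq, hμ]
    nlinarith

namespace IsOuterNormal

variable {A B : Set (EucN N)} {x ν μ : EucN N}

theorem tendsto_volume_lowerHalfBall_sdiff_div_ball (hA : MeasurableSet A)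
    (h : IsOuterNormal A x ν) :
    Tendsto (fun r => volume (lowerHalfBall x ν r \ A) / volume (ball x r)) (𝓝[>] 0) (𝓝 0) :=
  tendsto_measure_sdiff_div_of_tendsto_measure_inter_div volume hA
    (lowerHalfBall_subset_ball x ν) (fun _ => measure_ball_lt_top.ne) h.2.2

theorem tendsto_volume_lowerHalfBall_inter_div_ball (hA : MeasurableSet A) (hB : MeasurableSet B)
    (hνA : IsOuterNormal A x ν) (hμB : IsOuterNormal B x μ)
    (hAB : Tendsto (fun r => volume (A ∩ B ∩ ball x r) / volume (ball x r)) (𝓝[>] 0) (𝓝 0)) :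
    Tendsto (fun r => volume (lowerHalfBall x ν r ∩ lowerHalfBall x μ r) / volume (ball x r))
      (𝓝[>] 0) (𝓝 0) := by
  have hcover : ∀ r, lowerHalfBall x ν r ∩ lowerHalfBall x μ r ⊆
      (lowerHalfBall x ν r \ A) ∪ (lowerHalfBall x μ r \ B) ∪ (A ∩ B ∩ ball x r) := by
    rintro r w ⟨hwν, hwμ⟩
    by_cases hwA : w ∈ A <;> by_cases hwB : w ∈ B
    exacts [Or.inr ⟨⟨hwA, hwB⟩, lowerHalfBall_subset_ball x ν r hwν⟩, Or.inl (Or.inr ⟨hwμ, hwB⟩),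
      Or.inl (Or.inl ⟨hwν, hwA⟩), Or.inl (Or.inl ⟨hwν, hwA⟩)]
  have hsum := ((hνA.tendsto_volume_lowerHalfBall_sdiff_div_ball hA).add
    (hμB.tendsto_volume_lowerHalfBall_sdiff_div_ball hB)).add hAB
  rw [add_zero, add_zero] at hsum
  refine tendsto_of_tendsto_of_tendsto_of_le_of_le tendsto_const_nhds hsum (fun _ => zero_le)
    fun r => ?_
  simp only [← ENNReal.add_div]
  gcongr
  exact (measure_mono (hcover r)).trans
    ((measure_union_le _ _).trans (add_le_add_left (measure_union_le _ _) _))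

theorem eq_neg_of_tendsto_volume_inter_div_ball (hA : MeasurableSet A) (hB : MeasurableSet B)
    (hνA : IsOuterNormal A x ν) (hμB : IsOuterNormal B x μ)
    (hAB : Tendsto (fun r => volume (A ∩ B ∩ ball x r) / volume (ball x r)) (𝓝[>] 0) (𝓝 0)) :
    ν = -μ := by
  by_contra hne
  set K := lowerHalfBall 0 ν 1 ∩ lowerHalfBall 0 μ 1
  have hK : 0 < volume K :=
    ((isOpen_lowerHalfBall 0 ν 1).inter (isOpen_lowerHalfBall 0 μ 1)).measure_pos volume
      (nonempty_lowerHalfBall_inter hνA.1 hμB.1 hne 0 one_pos)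
  have hscale : ∀ r ∈ Ioi (0 : ℝ), volume K / volume (ball (0 : EucN N) 1) =
      volume (lowerHalfBall x ν r ∩ lowerHalfBall x μ r) / volume (ball x r) := by
    intro r hr
    rw [lowerHalfBall_eq_vadd_smul x ν hr, lowerHalfBall_eq_vadd_smul x μ hr,
      ← vadd_set_inter, ← smul_set_inter₀ (ne_of_gt hr), addHaar_vadd_smul_div_ball volume K x hr]
  have hlim := (hνA.tendsto_volume_lowerHalfBall_inter_div_ball hA hB hμB hAB).congr'
    (eventuallyEq_nhdsWithin_of_eqOn hscale).symm
  have hzero := tendsto_nhds_unique tendsto_const_nhds hlim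
  rw [ENNReal.div_eq_zero_iff] at hzero
  exact hzero.elim hK.ne' measure_ball_lt_top.ne

end IsOuterNormal

theorem isOuterNormal_outerNormal {E : Set (EucN N)} {x : EucN N}
    (h : x ∈ redBoundary E) : IsOuterNormal E x (outerNormal E x) := by
  have h' : ∃ ν, IsOuterNormal E x ν := h
  rw [outerNormal, dif_pos h']
  exact h'.choose_spec

theorem normal_reversed_general {N : ℕ} (E E' Ω : Set (EucN N))
    (hE' : HasFinPer E') (hΩ : HasFinPer Ω)
    (hcap : E' ∩ Ω = E ∩ Ω) (z : EucN N)
    (hz : z ∈ redBoundary E' ∩ redBoundary Ω)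
    (hz0 : Tendsto (fun r => volume (E ∩ ball z r) / volume (ball z r))
      (𝓝[>] (0:ℝ)) (𝓝 0)) :
    outerNormal E' z = -outerNormal Ω z := by
  refine (isOuterNormal_outerNormal hz.1).eq_neg_of_tendsto_volume_inter_div_ball hE'.1 hΩ.1
    (isOuterNormal_outerNormal hz.2) ?_
  refine tendsto_of_tendsto_of_tendsto_of_le_of_le tendsto_const_nhds hz0 (fun _ => zero_le)
    fun r => ENNReal.div_le_div_right (measure_mono ?_) _
  rw [hcap, inter_assoc]
  exact inter_subset_inter_right _ inter_subset_right

/-- If `E ⊆ E'`, `E' ∩ Ω = E ∩ Ω` and `z ∈ ∂*E' ∩ ∂*Ω` has density `0` for `E`, then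
`ν_{E'}(z) = -ν_Ω(z)`. -/
theorem normal_reversed {N : ℕ} (E E' Ω : Set (EucN N))
    (hE : HasFinPer E) (hE' : HasFinPer E') (hΩ : HasFinPer Ω)
    (hsub : E ⊆ E') (hcap : E' ∩ Ω = E ∩ Ω) (z : EucN N)
    (hz : z ∈ redBoundary E' ∩ redBoundary Ω)
    (hz0 : Tendsto (fun r => volume (E ∩ ball z r) / volume (ball z r))
      (𝓝[>] (0:ℝ)) (𝓝 0)) :
    outerNormal E' z = -outerNormal Ω z :=
  normal_reversed_general E E' Ω hE' hΩ hcap z hz hz0
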